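/- arXiv:math/0612038 — 2 statements merged into one kernel-verified Lean document; each statement's English description precedes it below -/
import Mathlib

section
/- Let F¹ = (f¹_i)_{i∈I} ⊆ H₁ and F² = (f²_i)_{i∈I} ⊆ H₂ be frames indexed by I that are orthogonal in the sense of supersets. Then the superset F¹ ⊕ F² = (f¹_i ⊕ f²_i)_{i∈I} is a frame for H₁ ⊕ H₂ and μ(F¹ ⊕ F²)(p) = μ(F¹)(p) + μ(F²)(p) for every free ultrafilter p on ℕ. -/
open Filter Topology

noncomputable section

/-- A family `f : ι → H` is a frame for the complex Hilbert space `H`. -/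
def IsFrame {ι : Type*} {H : Type*} [NormedAddCommGroup H] [InnerProductSpace ℂ H]
    (f : ι → H) : Prop :=
  ∃ A B : ℝ, 0 < A ∧ 0 < B ∧ ∀ h : H,
    A * ‖h‖ ^ 2 ≤ ∑' i, ‖(inner ℂ h (f i) : ℂ)‖ ^ 2 ∧
    ∑' i, ‖(inner ℂ h (f i) : ℂ)‖ ^ 2 ≤ B * ‖h‖ ^ 2

/-- The frame operator `S h = ∑_i ⟨h, f i⟩ f i` (paper's first-linear convention). -/
def frameOp {ι : Type*} {H : Type*} [NormedAddCommGroup H] [InnerProductSpace ℂ H]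
    (f : ι → H) (h : H) : H :=
  ∑' i, (inner ℂ (f i) h : ℂ) • f i

/-- `ftil` is the canonical dual frame of `f`: `S (ftil i) = f i`, i.e. `ftil i = S⁻¹ (f i)`. -/
def IsCanonicalDual {ι : Type*} {H : Type*} [NormedAddCommGroup H] [InnerProductSpace ℂ H]
    (f ftil : ι → H) : Prop :=
  ∀ i, frameOp f (ftil i) = f i

/-- `b n = ∑_{i ∈ Iₙ} ⟨f i, f̃ i⟩` (a real number; we take the real part). -/
def bSeq {ι : Type*} {H : Type*} [NormedAddCommGroup H] [InnerProductSpace ℂ H]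
    (In : ℕ → Finset ι) (f ftil : ι → H) (n : ℕ) : ℝ :=
  (∑ i ∈ In n, (inner ℂ (f i) (ftil i) : ℂ)).re

/-- `x ≈ y` : `(xₙ − yₙ)/|Iₙ| → 0`. -/
def SeqApprox {ι : Type*} (In : ℕ → Finset ι) (x y : ℕ → ℝ) : Prop :=
  Tendsto (fun n => (x n - y n) / ((In n).card : ℝ)) atTop (nhds 0)

/-- The limit of a real sequence along an ultrafilter `p` on `ℕ` (the `p`-limit;
for bounded sequences this limit exists and `limUnder` selects it). -/
def ulim (p : Ultrafilter ℕ) (x : ℕ → ℝ) : ℝ :=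
  limUnder (p : Filter ℕ) x

/-- A free ultrafilter is one containing no finite set, i.e. one finer than `cofinite`. -/
def Ultrafilter.IsFree (p : Ultrafilter ℕ) : Prop :=
  (p : Filter ℕ) ≤ Filter.cofinite

/-- The ultrafilter frame measure function `μ(F)(p) = p-lim bₙ(F)/|Iₙ|`. -/
def muU {ι : Type*} {H : Type*} [NormedAddCommGroup H] [InnerProductSpace ℂ H]
    (In : ℕ → Finset ι) (f ftil : ι → H) (p : Ultrafilter ℕ) : ℝ :=
  ulim p (fun n => bSeq In f ftil n / ((In n).card : ℝ))

/-- Two frames indexed by `I` are orthogonal in the sense of supersets: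
`∑_i ⟨g, f¹_i⟩⟨f²_i, h⟩ = 0` for all `g ∈ H₁`, `h ∈ H₂` (paper's first-linear
convention, so `⟨g, f¹_i⟩ = ⟪f¹_i, g⟫` and `⟨f²_i, h⟩ = ⟪h, f²_i⟫` in Mathlib's). -/
def SupersetOrthogonal {ι : Type*}
    {H₁ : Type*} [NormedAddCommGroup H₁] [InnerProductSpace ℂ H₁]
    {H₂ : Type*} [NormedAddCommGroup H₂] [InnerProductSpace ℂ H₂]
    (f₁ : ι → H₁) (f₂ : ι → H₂) : Prop :=
  ∀ (g : H₁) (h : H₂), ∑' i, (inner ℂ (f₁ i) g : ℂ) * (inner ℂ h (f₂ i) : ℂ) = 0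

/-- The superset `F¹ ⊕ F² = (f¹_i ⊕ f²_i)_i` in the Hilbert direct sum `H₁ ⊕ H₂`. -/
def supersetFam {ι : Type*}
    {H₁ : Type*} [NormedAddCommGroup H₁] [InnerProductSpace ℂ H₁]
    {H₂ : Type*} [NormedAddCommGroup H₂] [InnerProductSpace ℂ H₂]
    (f₁ : ι → H₁) (f₂ : ι → H₂) (i : ι) : WithLp 2 (H₁ × H₂) :=
  (WithLp.equiv 2 (H₁ × H₂)).symm (f₁ i, f₂ i)

/-! The analysis coefficients of the superset at `g = (g₁, g₂)` are `⟨g₁, f¹ᵢ⟩ + ⟨g₂, f²ᵢ⟩`;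
orthogonality of the supersets kills every cross term in the sums they enter, so both the
frame sums and the frame operator split componentwise: `S = S₁ ⊕ S₂`. Hence the canonical dual
of `F¹ ⊕ F²` is `F̃¹ ⊕ F̃²`, the partial sums `bₙ` are additive, and since each `⟨fᵢ, f̃ᵢ⟩`
lies in `[0, 1]` the averages `aₙ` are bounded, so their `p`-limits exist and add. -/

open scoped InnerProductSpace ComplexConjugate

lemma exists_tendsto_ultrafilter_of_isCompact {α X : Type*} [TopologicalSpace X] {s : Set X}
    (hs : IsCompact s) {x : α → X} (hx : ∀ a, x a ∈ s) (p : Ultrafilter α) :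
    ∃ L, Tendsto x p (𝓝 L) := by
  obtain ⟨L, -, hL⟩ := hs.ultrafilter_le_nhds' (p.map x)
    (Ultrafilter.mem_map.mpr (Eventually.of_forall hx))
  exact ⟨L, hL⟩

lemma ulim_add {p : Ultrafilter ℕ} {x y : ℕ → ℝ} (hx : ∃ L, Tendsto x p (𝓝 L))
    (hy : ∃ L, Tendsto y p (𝓝 L)) :
    ulim p (fun n => x n + y n) = ulim p x + ulim p y := by
  obtain ⟨L, hL⟩ := hx
  obtain ⟨M, hM⟩ := hy
  rw [ulim, ulim, ulim, hL.limUnder_eq, hM.limUnder_eq, (hL.add hM).limUnder_eq]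

section Frame

variable {ι H : Type*} [NormedAddCommGroup H] [InnerProductSpace ℂ H]

lemma ofReal_tsum_norm_inner_sq (f : ι → H) (h : H) :
    ((∑' i, ‖⟪h, f i⟫_ℂ‖ ^ 2 : ℝ) : ℂ) = ∑' i, ⟪f i, h⟫_ℂ * ⟪h, f i⟫_ℂ := by
  rw [Complex.ofReal_tsum]
  refine tsum_congr fun i => ?_
  rw [← inner_conj_symm (f i) h, RCLike.conj_mul]
  push_cast
  rfl

lemma summable_mul_of_summable_norm_sq {a b : ι → ℂ} (ha : Summable fun i => ‖a i‖ ^ 2)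
    (hb : Summable fun i => ‖b i‖ ^ 2) : Summable fun i => a i * b i := by
  refine Summable.of_norm (Summable.of_nonneg_of_le (fun i => norm_nonneg _)
    (fun i => ?_) ((ha.add hb).mul_left (1 / 2 : ℝ)))
  rw [norm_mul]
  nlinarith [sq_nonneg (‖a i‖ - ‖b i‖)]

lemma norm_sum_smul_sq_le {f : ι → H} {B : ℝ} (hB : 0 ≤ B)
    (hsum : ∀ h : H, Summable fun i => ‖⟪h, f i⟫_ℂ‖ ^ 2)
    (hbessel : ∀ h : H, ∑' i, ‖⟪h, f i⟫_ℂ‖ ^ 2 ≤ B * ‖h‖ ^ 2) (c : ι → ℂ) (t : Finset ι) :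
    ‖∑ i ∈ t, c i • f i‖ ^ 2 ≤ B * ∑ i ∈ t, ‖c i‖ ^ 2 := by
  set v := ∑ i ∈ t, c i • f i
  have hv : ‖v‖ ^ 2 ≤ ∑ i ∈ t, ‖c i‖ * ‖⟪v, f i⟫_ℂ‖ := by
    rw [← inner_self_eq_norm_sq (𝕜 := ℂ), inner_sum, map_sum]
    refine Finset.sum_le_sum fun i _ => ?_
    rw [inner_smul_right, ← norm_mul]
    exact RCLike.re_le_norm _
  have hcoeff : ∑ i ∈ t, ‖⟪v, f i⟫_ℂ‖ ^ 2 ≤ B * ‖v‖ ^ 2 :=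
    ((hsum v).sum_le_tsum t fun i _ => by positivity).trans (hbessel v)
  have hcs := Finset.sum_mul_sq_le_sq_mul_sq t (fun i => ‖c i‖) fun i => ‖⟪v, f i⟫_ℂ‖
  have hc : 0 ≤ ∑ i ∈ t, ‖c i‖ ^ 2 := by positivity
  -- `‖v‖⁴ ≤ (∑ ‖cᵢ‖²) · B ‖v‖²`; divide by `‖v‖²`
  rcases (sq_nonneg ‖v‖).eq_or_lt with hv0 | hvpos
  · rw [← hv0]; positivity
  · nlinarith [mul_le_mul_of_nonneg_left hcoeff hc]

lemma IsFrame.eq_zero_of_tsum_norm_inner_sq_eq_zero {f : ι → H} (hf : IsFrame f) {h : H}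
    (h0 : ∑' i, ‖⟪h, f i⟫_ℂ‖ ^ 2 = 0) : h = 0 := by
  obtain ⟨A, B, hA, -, hfr⟩ := hf
  have hlow := (hfr h).1
  rw [h0] at hlow
  by_contra hne
  linarith [mul_pos hA (pow_pos (norm_pos_iff.mpr hne) 2)]

lemma IsFrame.summable_norm_inner_sq {f : ι → H} (hf : IsFrame f) (h : H) :
    Summable fun i => ‖⟪h, f i⟫_ℂ‖ ^ 2 := by
  by_contra hs
  have hh := hf.eq_zero_of_tsum_norm_inner_sq_eq_zero (tsum_eq_zero_of_not_summable hs)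
  exact hs (by simp [hh])

lemma IsFrame.summable_norm_inner_sq' {f : ι → H} (hf : IsFrame f) (h : H) :
    Summable fun i => ‖⟪f i, h⟫_ℂ‖ ^ 2 := by
  simpa only [norm_inner_symm] using hf.summable_norm_inner_sq h

lemma IsFrame.summable_smul [CompleteSpace H] {f : ι → H} (hf : IsFrame f) {c : ι → ℂ}
    (hc : Summable fun i => ‖c i‖ ^ 2) : Summable fun i => c i • f i := by
  obtain ⟨_, B, _, hB, hfr⟩ := id hf
  refine summable_iff_vanishing_norm.mpr fun ε hε => ?_
  obtain ⟨s, hs⟩ := summable_iff_vanishing_norm.mp hc (ε ^ 2 / B) (by positivity)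
  refine ⟨s, fun t ht => lt_of_pow_lt_pow_left₀ 2 hε.le ?_⟩
  have hts := hs t ht
  rw [Real.norm_of_nonneg (by positivity)] at hts
  calc ‖∑ i ∈ t, c i • f i‖ ^ 2 ≤ B * ∑ i ∈ t, ‖c i‖ ^ 2 :=
        norm_sum_smul_sq_le hB.le hf.summable_norm_inner_sq (fun h => (hfr h).2) c t
    _ < B * (ε ^ 2 / B) := mul_lt_mul_of_pos_left hts hB
    _ = ε ^ 2 := by field_simp

variable [CompleteSpace H] {f : ι → H}

lemma IsFrame.inner_frameOp (hf : IsFrame f) (h g : H) :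
    ⟪g, frameOp f h⟫_ℂ = ∑' i, ⟪f i, h⟫_ℂ * ⟪g, f i⟫_ℂ := by
  rw [frameOp, ← innerSL_apply_apply ℂ g,
    (innerSL ℂ g).map_tsum (hf.summable_smul (hf.summable_norm_inner_sq' h))]
  exact tsum_congr fun i => by rw [innerSL_apply_apply, inner_smul_right]

lemma IsFrame.inner_frameOp_self (hf : IsFrame f) (h : H) :
    ⟪h, frameOp f h⟫_ℂ = ((∑' i, ‖⟪h, f i⟫_ℂ‖ ^ 2 : ℝ) : ℂ) := by
  rw [hf.inner_frameOp, ofReal_tsum_norm_inner_sq]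

lemma IsFrame.frameOp_sub (hf : IsFrame f) (x y : H) :
    frameOp f (x - y) = frameOp f x - frameOp f y := by
  simp only [frameOp, inner_sub_right, sub_smul]
  exact (hf.summable_smul (hf.summable_norm_inner_sq' x)).tsum_sub
    (hf.summable_smul (hf.summable_norm_inner_sq' y))

lemma IsFrame.frameOp_injective (hf : IsFrame f) : Function.Injective (frameOp f) := by
  intro x y hxy
  refine sub_eq_zero.mp (hf.eq_zero_of_tsum_norm_inner_sq_eq_zero ?_)
  have hself := hf.inner_frameOp_self (x - y)
  rw [hf.frameOp_sub, hxy, sub_self, inner_zero_right] at hself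
  exact_mod_cast hself.symm

lemma IsCanonicalDual.unique (hf : IsFrame f) {g g' : ι → H} (hg : IsCanonicalDual f g)
    (hg' : IsCanonicalDual f g') : g = g' :=
  funext fun i => hf.frameOp_injective ((hg i).trans (hg' i).symm)

/-- With `r = ∑ⱼ |⟨x, fⱼ⟩|² = ⟨x, S x⟩ = ⟨x, fᵢ⟩`, the single term `j = i` gives `r² ≤ r`. -/
lemma IsFrame.re_inner_mem_Icc_of_frameOp_eq (hf : IsFrame f) {x : H} {i : ι}
    (hx : frameOp f x = f i) : (⟪f i, x⟫_ℂ).re ∈ Set.Icc (0 : ℝ) 1 := by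
  set r := ∑' j, ‖⟪x, f j⟫_ℂ‖ ^ 2
  have hr : ⟪x, f i⟫_ℂ = r := hx ▸ hf.inner_frameOp_self x
  have hterm : ‖⟪x, f i⟫_ℂ‖ ^ 2 ≤ r :=
    (hf.summable_norm_inner_sq x).le_tsum i fun j _ => by positivity
  have hr0 : 0 ≤ r := tsum_nonneg fun j => by positivity
  rw [hr, Complex.norm_real, Real.norm_eq_abs, sq_abs] at hterm
  rw [← inner_conj_symm, hr, Complex.conj_ofReal, Complex.ofReal_re]
  exact ⟨hr0, by nlinarith⟩

lemma IsFrame.bSeq_div_card_mem_Icc (hf : IsFrame f) {ftil : ι → H}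
    (hd : IsCanonicalDual f ftil) (In : ℕ → Finset ι) (n : ℕ) :
    bSeq In f ftil n / ((In n).card : ℝ) ∈ Set.Icc (0 : ℝ) 1 := by
  have hmem i := hf.re_inner_mem_Icc_of_frameOp_eq (hd i)
  have hb0 : 0 ≤ bSeq In f ftil n := by
    rw [bSeq, Complex.re_sum]
    exact Finset.sum_nonneg fun i _ => (hmem i).1
  have hb1 : bSeq In f ftil n ≤ (In n).card := by
    rw [bSeq, Complex.re_sum]
    simpa using Finset.sum_le_sum fun i (_ : i ∈ In n) => (hmem i).2
  exact ⟨div_nonneg hb0 (Nat.cast_nonneg _), div_le_one_of_le₀ hb1 (Nat.cast_nonneg _)⟩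

lemma IsFrame.exists_tendsto_bSeq_div_card (hf : IsFrame f) {ftil : ι → H}
    (hd : IsCanonicalDual f ftil) (In : ℕ → Finset ι) (p : Ultrafilter ℕ) :
    ∃ L, Tendsto (fun n => bSeq In f ftil n / ((In n).card : ℝ)) p (𝓝 L) :=
  exists_tendsto_ultrafilter_of_isCompact isCompact_Icc (hf.bSeq_div_card_mem_Icc hd In) p

end Frame

section Superset

variable {ι H₁ H₂ : Type*} [NormedAddCommGroup H₁] [InnerProductSpace ℂ H₁]
  [NormedAddCommGroup H₂] [InnerProductSpace ℂ H₂] {f₁ : ι → H₁} {f₂ : ι → H₂}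

lemma SupersetOrthogonal.tsum_swap_eq_zero (horth : SupersetOrthogonal f₁ f₂) (g : H₁) (h : H₂) :
    ∑' i, ⟪f₂ i, h⟫_ℂ * ⟪g, f₁ i⟫_ℂ = 0 := by
  have hconj := congrArg star (horth g h)
  rw [tsum_star, star_zero] at hconj
  simpa only [star_mul', RCLike.star_def, inner_conj_symm, mul_comm] using hconj

lemma inner_supersetFam_left (z : WithLp 2 (H₁ × H₂)) (i : ι) :
    ⟪supersetFam f₁ f₂ i, z⟫_ℂ = ⟪f₁ i, z.fst⟫_ℂ + ⟪f₂ i, z.snd⟫_ℂ :=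
  WithLp.prod_inner_apply _ _

lemma inner_supersetFam_right (w : WithLp 2 (H₁ × H₂)) (i : ι) :
    ⟪w, supersetFam f₁ f₂ i⟫_ℂ = ⟪w.fst, f₁ i⟫_ℂ + ⟪w.snd, f₂ i⟫_ℂ :=
  WithLp.prod_inner_apply _ _

lemma tsum_inner_supersetFam_mul (hf₁ : IsFrame f₁) (hf₂ : IsFrame f₂)
    (horth : SupersetOrthogonal f₁ f₂) (z w : WithLp 2 (H₁ × H₂)) :
    ∑' i, ⟪supersetFam f₁ f₂ i, z⟫_ℂ * ⟪w, supersetFam f₁ f₂ i⟫_ℂ =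
      ∑' i, ⟪f₁ i, z.fst⟫_ℂ * ⟪w.fst, f₁ i⟫_ℂ + ∑' i, ⟪f₂ i, z.snd⟫_ℂ * ⟪w.snd, f₂ i⟫_ℂ := by
  have s₁₁ := summable_mul_of_summable_norm_sq (hf₁.summable_norm_inner_sq' z.fst)
    (hf₁.summable_norm_inner_sq w.fst)
  have s₁₂ := summable_mul_of_summable_norm_sq (hf₁.summable_norm_inner_sq' z.fst)
    (hf₂.summable_norm_inner_sq w.snd)
  have s₂₁ := summable_mul_of_summable_norm_sq (hf₂.summable_norm_inner_sq' z.snd)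
    (hf₁.summable_norm_inner_sq w.fst)
  have s₂₂ := summable_mul_of_summable_norm_sq (hf₂.summable_norm_inner_sq' z.snd)
    (hf₂.summable_norm_inner_sq w.snd)
  simp only [inner_supersetFam_left, inner_supersetFam_right, add_mul, mul_add]
  rw [(s₁₁.add s₂₁).tsum_add (s₁₂.add s₂₂), s₁₁.tsum_add s₂₁, s₁₂.tsum_add s₂₂,
    horth z.fst w.snd, horth.tsum_swap_eq_zero w.fst z.snd]
  ring

lemma tsum_norm_inner_supersetFam_sq (hf₁ : IsFrame f₁) (hf₂ : IsFrame f₂)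
    (horth : SupersetOrthogonal f₁ f₂) (g : WithLp 2 (H₁ × H₂)) :
    ∑' i, ‖⟪g, supersetFam f₁ f₂ i⟫_ℂ‖ ^ 2 =
      ∑' i, ‖⟪g.fst, f₁ i⟫_ℂ‖ ^ 2 + ∑' i, ‖⟪g.snd, f₂ i⟫_ℂ‖ ^ 2 := by
  apply Complex.ofReal_injective
  rw [Complex.ofReal_add]
  simp only [ofReal_tsum_norm_inner_sq]
  exact tsum_inner_supersetFam_mul hf₁ hf₂ horth g g

lemma isFrame_supersetFam (hf₁ : IsFrame f₁) (hf₂ : IsFrame f₂)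
    (horth : SupersetOrthogonal f₁ f₂) : IsFrame (supersetFam f₁ f₂) := by
  obtain ⟨A₁, B₁, hA₁, hB₁, hfr₁⟩ := id hf₁
  obtain ⟨A₂, B₂, hA₂, hB₂, hfr₂⟩ := id hf₂
  refine ⟨min A₁ A₂, B₁ + B₂, lt_min hA₁ hA₂, add_pos hB₁ hB₂, fun g => ?_⟩
  rw [tsum_norm_inner_supersetFam_sq hf₁ hf₂ horth, WithLp.prod_norm_sq_eq_of_L2]
  obtain ⟨hlow₁, hup₁⟩ := hfr₁ g.fst
  obtain ⟨hlow₂, hup₂⟩ := hfr₂ g.snd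
  have hmin₁ := min_le_left A₁ A₂
  have hmin₂ := min_le_right A₁ A₂
  constructor <;> nlinarith [sq_nonneg ‖g.fst‖, sq_nonneg ‖g.snd‖]

variable [CompleteSpace H₁] [CompleteSpace H₂]

lemma frameOp_supersetFam (hf₁ : IsFrame f₁) (hf₂ : IsFrame f₂)
    (horth : SupersetOrthogonal f₁ f₂) (z : WithLp 2 (H₁ × H₂)) :
    frameOp (supersetFam f₁ f₂) z = WithLp.toLp 2 (frameOp f₁ z.fst, frameOp f₂ z.snd) := by
  refine ext_inner_left ℂ fun w => ?_
  rw [(isFrame_supersetFam hf₁ hf₂ horth).inner_frameOp, tsum_inner_supersetFam_mul hf₁ hf₂ horth,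
    ← hf₁.inner_frameOp, ← hf₂.inner_frameOp, WithLp.prod_inner_apply]
  rfl

lemma IsCanonicalDual.supersetFam {ftil₁ : ι → H₁} {ftil₂ : ι → H₂} (hf₁ : IsFrame f₁)
    (hf₂ : IsFrame f₂) (horth : SupersetOrthogonal f₁ f₂) (hd₁ : IsCanonicalDual f₁ ftil₁)
    (hd₂ : IsCanonicalDual f₂ ftil₂) :
    IsCanonicalDual (supersetFam f₁ f₂) fun i => WithLp.toLp 2 (ftil₁ i, ftil₂ i) := by
  intro i
  rw [frameOp_supersetFam hf₁ hf₂ horth]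
  exact congrArg (WithLp.toLp 2) (Prod.ext (hd₁ i) (hd₂ i))

end Superset

lemma bSeq_supersetFam {ι H₁ H₂ : Type*} [NormedAddCommGroup H₁] [InnerProductSpace ℂ H₁]
    [NormedAddCommGroup H₂] [InnerProductSpace ℂ H₂] (In : ℕ → Finset ι) (f₁ ftil₁ : ι → H₁)
    (f₂ ftil₂ : ι → H₂) (n : ℕ) :
    bSeq In (supersetFam f₁ f₂) (fun i => WithLp.toLp 2 (ftil₁ i, ftil₂ i)) n =
      bSeq In f₁ ftil₁ n + bSeq In f₂ ftil₂ n := by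
  simp only [bSeq, inner_supersetFam_left, Finset.sum_add_distrib, Complex.add_re]
  rfl

theorem stmt5_general {ι : Type*}
    {H₁ : Type*} [NormedAddCommGroup H₁] [InnerProductSpace ℂ H₁] [CompleteSpace H₁]
    {H₂ : Type*} [NormedAddCommGroup H₂] [InnerProductSpace ℂ H₂] [CompleteSpace H₂]
    (In : ℕ → Finset ι)
    (f₁ ftil₁ : ι → H₁) (hf₁ : IsFrame f₁) (hdual₁ : IsCanonicalDual f₁ ftil₁)
    (f₂ ftil₂ : ι → H₂) (hf₂ : IsFrame f₂) (hdual₂ : IsCanonicalDual f₂ ftil₂)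
    (horth : SupersetOrthogonal f₁ f₂) :
    IsFrame (supersetFam f₁ f₂) ∧
    ∀ ftilS : ι → WithLp 2 (H₁ × H₂),
      IsCanonicalDual (supersetFam f₁ f₂) ftilS →
      ∀ p : Ultrafilter ℕ, p.IsFree →
        muU In (supersetFam f₁ f₂) ftilS p =
          muU In f₁ ftil₁ p + muU In f₂ ftil₂ p := by
  have hF := isFrame_supersetFam hf₁ hf₂ horth
  refine ⟨hF, fun ftilS hdualS p _ => ?_⟩
  obtain rfl := hdualS.unique hF (hdual₁.supersetFam hf₁ hf₂ horth hdual₂)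
  simp only [muU, bSeq_supersetFam, add_div]
  exact ulim_add (hf₁.exists_tendsto_bSeq_div_card hdual₁ In p)
    (hf₂.exists_tendsto_bSeq_div_card hdual₂ In p)

/-- If frames `F¹ ⊆ H₁` and `F² ⊆ H₂` are orthogonal in the sense of
supersets, then `F¹ ⊕ F²` is a frame for `H₁ ⊕ H₂` and
`μ(F¹ ⊕ F²)(p) = μ(F¹)(p) + μ(F²)(p)` for every free ultrafilter `p`. -/
theorem stmt5 {ι : Type*} [Countable ι] [Infinite ι]
    {H₁ : Type*} [NormedAddCommGroup H₁] [InnerProductSpace ℂ H₁] [CompleteSpace H₁]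
    {H₂ : Type*} [NormedAddCommGroup H₂] [InnerProductSpace ℂ H₂] [CompleteSpace H₂]
    (In : ℕ → Finset ι) (hmono : Monotone In) (hcover : ∀ i : ι, ∃ n, i ∈ In n)
    (f₁ ftil₁ : ι → H₁) (hf₁ : IsFrame f₁) (hdual₁ : IsCanonicalDual f₁ ftil₁)
    (f₂ ftil₂ : ι → H₂) (hf₂ : IsFrame f₂) (hdual₂ : IsCanonicalDual f₂ ftil₂)
    (horth : SupersetOrthogonal f₁ f₂) :
    IsFrame (supersetFam f₁ f₂) ∧
    ∀ ftilS : ι → WithLp 2 (H₁ × H₂),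
      IsCanonicalDual (supersetFam f₁ f₂) ftilS →
      ∀ p : Ultrafilter ℕ, p.IsFree →
        muU In (supersetFam f₁ f₂) ftilS p =
          muU In f₁ ftil₁ p + muU In f₂ ftil₂ p :=
  stmt5_general In f₁ ftil₁ hf₁ hdual₁ f₂ ftil₂ hf₂ hdual₂ horth

end
end

section
/- Let m₁ : X^ℝ → C(W₁,ℝ) and m₂ : X^ℝ → C(W₂,ℝ) be minimal sequence measure functions on compact Hausdorff spaces W₁ and W₂. Then they are topologically equivalent: there exists a homeomorphism φ : W₁ → W₂ such that m₂(x)(φ(w)) = m₁(x)(w) for all x ∈ X^ℝ and all w ∈ W₁. -/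
/-!
Through the evaluation map `w ↦ (x ↦ m x w)`, a sequence measure function sends `W` into
`ℝ^{X^ℝ}`, and for a minimal one this identifies `W` with a set that does not depend on `m`: the
set `Ω` of cluster points of the relative densities `x ↦ xₙ / |Iₙ|`.
Every point `f ∈ Ω` is attained: otherwise compactness of `W` and the order property of `m`
yield finitely many `x` and an `ε > 0` with `ε • i ⪬ ∑ |x - f x • i|`, which fails along an
ultrafilter realising `f`.
Conversely, a liminf is a cluster value, so `⪬` is already detected on the preimage of `Ω`; the
restriction of `m` to that preimage is then again a sequence measure function, and
irreducibility forces the preimage to be all of `W`. Separability makes the evaluation map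
injective, hence a homeomorphism onto `Ω`.
-/

open Filter Topology

noncomputable section

/-- Frame-compatible sequence (index `n : ℕ` corresponds to the paper's `n+1`). -/
def FrameCompatible {ι : Type*} (In : ℕ → Finset ι) (x : ℕ → ℝ) : Prop :=
  (0 ≤ x 0 ∧ x 0 ≤ ((In 0).card : ℝ)) ∧
  ∀ n : ℕ, 0 ≤ x (n + 1) - x n ∧
    x (n + 1) - x n ≤ ((In (n + 1)).card : ℝ) - ((In n).card : ℝ)

/-- `X`: the set of frame compatible sequences. -/
def Xset {ι : Type*} (In : ℕ → Finset ι) : Set (ℕ → ℝ) :=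
  {x | FrameCompatible In x}

/-- `X⁺ = {c • x : x ∈ X, c ≥ 0}`. -/
def Xplus {ι : Type*} (In : ℕ → Finset ι) : Set (ℕ → ℝ) :=
  {y | ∃ c : ℝ, 0 ≤ c ∧ ∃ x ∈ Xset In, y = c • x}

/-- `X^ℝ = {x − y : x, y ∈ X⁺}`. -/
def XR {ι : Type*} (In : ℕ → Finset ι) : Set (ℕ → ℝ) :=
  {z | ∃ x ∈ Xplus In, ∃ y ∈ Xplus In, z = x - y}

/-- `y ⪬ x` : `liminf (xₙ − yₙ)/|Iₙ| ≥ 0`. -/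
def SeqLeq {ι : Type*} (In : ℕ → Finset ι) (y x : ℕ → ℝ) : Prop :=
  0 ≤ atTop.liminf fun n => (x n - y n) / ((In n).card : ℝ)

/-- A sequence measure function (modelled as a total map `(ℕ → ℝ) → C(W, ℝ)`,
constrained only on `X^ℝ`, its mathematical domain):
(1) for `x, y ∈ X^ℝ`, `m x = m y ↔ x ≈ y`;
(2) for `x, y ∈ X⁺`, `m x ≤ m y` pointwise iff `x ⪬ y`;
(3) `m i = 1` where `i = (|Iₙ|)ₙ`;
(4) `m` is linear (additive and homogeneous) on `X^ℝ`. -/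
def IsSeqMF {ι : Type*} (In : ℕ → Finset ι) {W : Type*} [TopologicalSpace W]
    (m : (ℕ → ℝ) → C(W, ℝ)) : Prop :=
  (∀ x ∈ XR In, ∀ y ∈ XR In, (m x = m y ↔ SeqApprox In x y)) ∧
  (∀ x ∈ Xplus In, ∀ y ∈ Xplus In, ((∀ w : W, m x w ≤ m y w) ↔ SeqLeq In x y)) ∧
  (m (fun n => ((In n).card : ℝ)) = 1) ∧
  (∀ x ∈ XR In, ∀ y ∈ XR In, m (x + y) = m x + m y) ∧
  (∀ x ∈ XR In, ∀ c : ℝ, m (c • x) = c • m x)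

/-- A sequence measure function is separable if the functions `m x` separate
the points of `W`. -/
def SMFSeparable {ι : Type*} (In : ℕ → Finset ι) {W : Type*} [TopologicalSpace W]
    (m : (ℕ → ℝ) → C(W, ℝ)) : Prop :=
  ∀ v w : W, v ≠ w → ∃ x ∈ XR In, m x v ≠ m x w

/-- A sequence measure function is reducible if its restriction to some proper compact
subset `V ⊊ W` is again a sequence measure function. -/
def SMFReducible {ι : Type*} (In : ℕ → Finset ι) {W : Type*} [TopologicalSpace W]
    (m : (ℕ → ℝ) → C(W, ℝ)) : Prop :=
  ∃ V : Set W, IsCompact V ∧ V ≠ Set.univ ∧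
    IsSeqMF In (fun x => (m x).restrict V)

/-- A sequence measure function is minimal if it is separable and irreducible. -/
def SMFMinimal {ι : Type*} (In : ℕ → Finset ι) {W : Type*} [TopologicalSpace W]
    (m : (ℕ → ℝ) → C(W, ℝ)) : Prop :=
  SMFSeparable In m ∧ ¬ SMFReducible In m

lemma isBoundedUnder_ge_of_abs_le {α : Type*} {l : Filter α} {u : α → ℝ} {C : ℝ}
    (h : ∀ a, |u a| ≤ C) : l.IsBoundedUnder (· ≥ ·) u :=
  isBoundedUnder_of ⟨-C, fun a => neg_le_of_abs_le (h a)⟩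

lemma isCoboundedUnder_ge_of_abs_le {α : Type*} {l : Filter α} [l.NeBot] {u : α → ℝ} {C : ℝ}
    (h : ∀ a, |u a| ≤ C) : l.IsCoboundedUnder (· ≥ ·) u :=
  (isBoundedUnder_of ⟨C, fun a => le_of_abs_le (h a)⟩).isCoboundedUnder_ge

lemma exists_pos_le_of_forall_pos {X : Type*} [TopologicalSpace X] [CompactSpace X]
    {h : X → ℝ} (hc : Continuous h) (hpos : ∀ x, 0 < h x) :
    ∃ ε > 0, ∀ x, ε ≤ h x := by
  cases isEmpty_or_nonempty X
  · exact ⟨1, one_pos, isEmptyElim⟩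
  · obtain ⟨x₀, -, hx₀⟩ := isCompact_univ.exists_isMinOn Set.univ_nonempty hc.continuousOn
    exact ⟨h x₀, hpos x₀, fun x => hx₀ (Set.mem_univ x)⟩

theorem exists_homeomorph_comp_eq_of_range_eq {X₁ X₂ Y : Type*} [TopologicalSpace X₁]
    [TopologicalSpace X₂] [TopologicalSpace Y] [CompactSpace X₁] [CompactSpace X₂] [T2Space Y]
    {f₁ : X₁ → Y} {f₂ : X₂ → Y} (hc₁ : Continuous f₁) (hc₂ : Continuous f₂)
    (hi₁ : Function.Injective f₁) (hi₂ : Function.Injective f₂)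
    (h : Set.range f₁ = Set.range f₂) :
    ∃ φ : X₁ ≃ₜ X₂, ∀ x, f₂ (φ x) = f₁ x := by
  have hf₁ := (hc₁.isClosedEmbedding hi₁).isEmbedding
  have hf₂ := (hc₂.isClosedEmbedding hi₂).isEmbedding
  refine ⟨hf₁.toHomeomorph.trans ((Homeomorph.setCongr h).trans hf₂.toHomeomorph.symm),
    fun x => ?_⟩
  have h₂ := congrArg Subtype.val
    (hf₂.toHomeomorph.apply_symm_apply (Homeomorph.setCongr h (hf₁.toHomeomorph x)))
  rw [hf₂.toHomeomorph_apply_coe] at h₂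
  exact h₂.trans (hf₁.toHomeomorph_apply_coe x)

namespace SeqMeasure

variable {ι : Type*} {In : ℕ → Finset ι}

/-- The sequence `i = (|Iₙ|)ₙ` of the paper. -/
def cardSeq (In : ℕ → Finset ι) : ℕ → ℝ := fun n => (In n).card

def increment : (ℕ → ℝ) →ₗ[ℝ] ℕ → ℝ where
  toFun x
    | 0 => x 0
    | n + 1 => x (n + 1) - x n
  map_add' x y := by
    ext (_ | n)
    · rfl
    · simp only [Pi.add_apply]; ring
  map_smul' c x := by
    ext (_ | n)
    · rfl
    · simp only [Pi.smul_apply, smul_eq_mul, RingHom.id_apply]; ring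

@[simp] lemma increment_zero (x : ℕ → ℝ) : increment x 0 = x 0 := rfl

@[simp] lemma increment_succ (x : ℕ → ℝ) (n : ℕ) :
    increment x (n + 1) = x (n + 1) - x n := rfl

lemma sum_range_increment (x : ℕ → ℝ) (n : ℕ) :
    ∑ k ∈ Finset.range (n + 1), increment x k = x n := by
  induction n with
  | zero => simp
  | succ n ih => rw [Finset.sum_range_succ, ih, increment_succ, add_sub_cancel]

lemma increment_cardSeq_nonneg (hmono : Monotone In) (n : ℕ) :
    0 ≤ increment (cardSeq In) n := by
  cases n with
  | zero => exact Nat.cast_nonneg _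
  | succ n => simpa [cardSeq] using Finset.card_le_card (hmono n.le_succ)

lemma frameCompatible_iff {x : ℕ → ℝ} :
    FrameCompatible In x ↔
      ∀ n, 0 ≤ increment x n ∧ increment x n ≤ increment (cardSeq In) n :=
  ⟨fun ⟨h0, hs⟩ n => by cases n with | zero => exact h0 | succ n => exact hs n,
    fun h => ⟨h 0, fun n => h (n + 1)⟩⟩

lemma smul_mem_Xplus {y : ℕ → ℝ} {c : ℝ} (hc : 0 ≤ c) (hy : y ∈ Xplus In) :
    c • y ∈ Xplus In :=
  let ⟨d, hd, x, hx, hxy⟩ := hy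
  ⟨c * d, mul_nonneg hc hd, x, hx, by rw [hxy, smul_smul]⟩

lemma Xplus_subset_XR : Xplus In ⊆ XR In := fun y hy =>
  ⟨(2 : ℝ) • y, smul_mem_Xplus zero_le_two hy, y, hy,
    by rw [two_smul, add_sub_cancel_right]⟩

lemma mem_Xplus_of_increment (hmono : Monotone In) {y : ℕ → ℝ} {c : ℝ} (hc : 0 ≤ c)
    (hy : ∀ n, 0 ≤ increment y n ∧ increment y n ≤ c * increment (cardSeq In) n) :
    y ∈ Xplus In := by
  have hc₁ : 0 < c + 1 := by linarith
  refine ⟨c + 1, hc₁.le, (c + 1)⁻¹ • y, frameCompatible_iff.2 fun n => ?_,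
    (smul_inv_smul₀ hc₁.ne' y).symm⟩
  have hΔ := increment_cardSeq_nonneg hmono n
  rw [map_smul, Pi.smul_apply, smul_eq_mul, inv_mul_le_iff₀ hc₁]
  exact ⟨mul_nonneg (inv_nonneg.2 hc₁.le) (hy n).1, (hy n).2.trans (by nlinarith)⟩

variable (In) in
def boundedIncrements : Submodule ℝ (ℕ → ℝ) where
  carrier := {z | ∃ C, 0 ≤ C ∧ ∀ n, |increment z n| ≤ C * increment (cardSeq In) n}
  add_mem' := by
    rintro z z' ⟨C, hC, hz⟩ ⟨C', hC', hz'⟩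
    refine ⟨C + C', add_nonneg hC hC', fun n => ?_⟩
    rw [map_add, Pi.add_apply, add_mul]
    exact (abs_add_le _ _).trans (add_le_add (hz n) (hz' n))
  zero_mem' := ⟨0, le_rfl, fun n => by simp⟩
  smul_mem' := by
    rintro c z ⟨C, hC, hz⟩
    refine ⟨|c| * C, mul_nonneg (abs_nonneg c) hC, fun n => ?_⟩
    rw [map_smul, Pi.smul_apply, smul_eq_mul, abs_mul, mul_assoc]
    exact mul_le_mul_of_nonneg_left (hz n) (abs_nonneg c)

lemma abs_mem_boundedIncrements {z : ℕ → ℝ} (hz : z ∈ boundedIncrements In) :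
    |z| ∈ boundedIncrements In := by
  obtain ⟨C, hC, hz⟩ := hz
  refine ⟨C, hC, fun n => le_trans ?_ (hz n)⟩
  cases n with
  | zero => simp
  | succ n => simpa using abs_abs_sub_abs_le (z (n + 1)) (z n)

lemma cardSeq_mem_boundedIncrements (hmono : Monotone In) :
    cardSeq In ∈ boundedIncrements In :=
  ⟨1, zero_le_one, fun n => by rw [one_mul, abs_of_nonneg (increment_cardSeq_nonneg hmono n)]⟩

lemma add_smul_cardSeq_mem_Xplus (hmono : Monotone In) {z : ℕ → ℝ} {C : ℝ} (hC : 0 ≤ C)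
    (hz : ∀ n, |increment z n| ≤ C * increment (cardSeq In) n) :
    z + C • cardSeq In ∈ Xplus In := by
  refine mem_Xplus_of_increment hmono (c := 2 * C) (by positivity) fun n => ?_
  have := abs_le.1 (hz n)
  simp only [map_add, map_smul, Pi.add_apply, Pi.smul_apply, smul_eq_mul]
  constructor <;> linarith

theorem mem_XR_iff (hmono : Monotone In) {z : ℕ → ℝ} :
    z ∈ XR In ↔ z ∈ boundedIncrements In := by
  constructor
  · rintro ⟨_, ⟨c, hc, a, ha, rfl⟩, _, ⟨d, hd, b, hb, rfl⟩, rfl⟩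
    refine ⟨c + d, add_nonneg hc hd, fun n => ?_⟩
    have ha := frameCompatible_iff.1 ha n
    have hb := frameCompatible_iff.1 hb n
    simp only [map_sub, map_smul, Pi.sub_apply, Pi.smul_apply, smul_eq_mul]
    rw [abs_le]
    constructor <;> nlinarith
  · rintro ⟨C, hC, hz⟩
    refine ⟨_, add_smul_cardSeq_mem_Xplus hmono hC hz, C • cardSeq In,
      ⟨C, hC, cardSeq In, ?_, rfl⟩, (add_sub_cancel_right _ _).symm⟩
    exact frameCompatible_iff.2 fun n => ⟨increment_cardSeq_nonneg hmono n, le_rfl⟩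

lemma cardSeq_mem_XR (hmono : Monotone In) : cardSeq In ∈ XR In :=
  (mem_XR_iff hmono).2 (cardSeq_mem_boundedIncrements hmono)

lemma smul_mem_XR (hmono : Monotone In) (c : ℝ) {z : ℕ → ℝ} (hz : z ∈ XR In) :
    c • z ∈ XR In :=
  (mem_XR_iff hmono).2 (Submodule.smul_mem _ c ((mem_XR_iff hmono).1 hz))

lemma eventually_add_smul_cardSeq_mem_Xplus (hmono : Monotone In) {z : ℕ → ℝ}
    (hz : z ∈ XR In) : ∀ᶠ C : ℝ in atTop, z + C • cardSeq In ∈ Xplus In := by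
  obtain ⟨C₀, hC₀, hz⟩ := (mem_XR_iff hmono).1 hz
  filter_upwards [eventually_ge_atTop C₀] with C hC
  exact add_smul_cardSeq_mem_Xplus hmono (hC₀.trans hC) fun n =>
    (hz n).trans (mul_le_mul_of_nonneg_right hC (increment_cardSeq_nonneg hmono n))

lemma exists_abs_div_cardSeq_le {z : ℕ → ℝ} (hz : z ∈ boundedIncrements In) :
    ∃ C, ∀ n, |z n / cardSeq In n| ≤ C := by
  obtain ⟨C, hC, hz⟩ := hz
  refine ⟨C, fun n => ?_⟩
  have hz_le : |z n| ≤ C * cardSeq In n := by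
    rw [← sum_range_increment z, ← sum_range_increment (cardSeq In), Finset.mul_sum]
    exact (Finset.abs_sum_le_sum_abs _ _).trans (Finset.sum_le_sum fun k _ => hz k)
  have hcard : 0 ≤ cardSeq In n := Nat.cast_nonneg _
  rw [abs_div, abs_of_nonneg hcard]
  exact div_le_of_le_mul₀ hcard hC hz_le

lemma eventually_cardSeq_pos [Nonempty ι] (hmono : Monotone In)
    (hcover : ∀ i, ∃ n, i ∈ In n) :
    ∀ᶠ n in atTop, 0 < cardSeq In n := by
  obtain ⟨n₀, hn₀⟩ := hcover (Classical.arbitrary ι)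
  filter_upwards [eventually_ge_atTop n₀] with n hn
  exact Nat.cast_pos.2 (Finset.card_pos.2 ⟨_, hmono hn hn₀⟩)

lemma seqLeq_of_le {x y : ℕ → ℝ} (hxy : y - x ∈ boundedIncrements In) (h : x ≤ y) :
    SeqLeq In x y := by
  obtain ⟨C, hC⟩ := exists_abs_div_cardSeq_le hxy
  exact le_liminf_of_le (isCoboundedUnder_ge_of_abs_le hC)
    (Eventually.of_forall fun n => div_nonneg (sub_nonneg.2 (h n)) (Nat.cast_nonneg _))

variable (In) in
def density (n : ℕ) (x : XR In) : ℝ := x.1 n / cardSeq In n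

variable (In) in
def limitDensities : Set (XR In → ℝ) := {f | MapClusterPt f atTop (density In)}

lemma isClosed_limitDensities : IsClosed (limitDensities In) := isClosed_setOfPred_clusterPt

lemma exists_tendsto_density (hmono : Monotone In) (U : Ultrafilter ℕ) :
    ∃ f, Tendsto (density In) U (𝓝 f) := by
  have hbdd (x : XR In) : ∃ C, ∀ n, |density In n x| ≤ C :=
    exists_abs_div_cardSeq_le ((mem_XR_iff hmono).1 x.2)
  choose C hC using hbdd
  have hK : IsCompact (Set.univ.pi fun x => Set.Icc (-C x) (C x)) :=
    isCompact_univ_pi fun x => isCompact_Icc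
  obtain ⟨f, -, hf⟩ := hK.ultrafilter_le_nhds (U.map (density In)) <| by
    rw [le_principal_iff, Ultrafilter.coe_map, mem_map]
    exact univ_mem' fun n x _ => abs_le.1 (hC x n)
  exact ⟨f, hf⟩

lemma sub_smul_cardSeq_mem_boundedIncrements (hmono : Monotone In) {z : ℕ → ℝ} (hz : z ∈ XR In)
    (c : ℝ) : z - c • cardSeq In ∈ boundedIncrements In :=
  sub_mem ((mem_XR_iff hmono).1 hz) (Submodule.smul_mem _ c (cardSeq_mem_boundedIncrements hmono))

variable (In) in
def deviation (J : Finset (XR In)) (f : XR In → ℝ) : ℕ → ℝ :=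
  ∑ x ∈ J, |x.1 - f x • cardSeq In|

lemma deviation_mem_XR (hmono : Monotone In) (J : Finset (XR In)) (f : XR In → ℝ) :
    deviation In J f ∈ XR In :=
  (mem_XR_iff hmono).2 (Submodule.sum_mem _ fun x _ =>
    abs_mem_boundedIncrements (sub_smul_cardSeq_mem_boundedIncrements hmono x.2 (f x)))

lemma tendsto_deviation_div [Nonempty ι] (hmono : Monotone In) (hcover : ∀ i, ∃ n, i ∈ In n)
    {U : Ultrafilter ℕ} (hU : (U : Filter ℕ) ≤ atTop) {f : XR In → ℝ}
    (hf : Tendsto (density In) U (𝓝 f)) (J : Finset (XR In)) :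
    Tendsto (fun n => deviation In J f n / cardSeq In n) U (𝓝 0) := by
  have h := tendsto_finsetSum J fun x _ => ((tendsto_pi_nhds.1 hf x).sub_const (f x)).abs
  simp only [sub_self, abs_zero, Finset.sum_const_zero] at h
  refine h.congr' (hU ?_)
  filter_upwards [eventually_cardSeq_pos hmono hcover] with n hn
  simp only [deviation, density, Finset.sum_apply, Pi.abs_apply, Pi.sub_apply, Pi.smul_apply,
    smul_eq_mul, Finset.sum_div]
  refine Finset.sum_congr rfl fun x _ => ?_
  rw [div_sub' hn.ne', abs_div, abs_of_pos hn, mul_comm]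

variable {W : Type*} [TopologicalSpace W] {m : (ℕ → ℝ) → C(W, ℝ)}

variable (In m) in
def evalMap (w : W) (x : XR In) : ℝ := m x w

lemma continuous_evalMap : Continuous (evalMap In m) :=
  continuous_pi fun x => (m x).continuous

lemma evalMap_injective (hsep : SMFSeparable In m) : Function.Injective (evalMap In m) := by
  intro v w h
  by_contra hne
  obtain ⟨x, hx, hvw⟩ := hsep v w hne
  exact hvw (congrFun h ⟨x, hx⟩)

end SeqMeasure

namespace IsSeqMF

open SeqMeasure

variable {ι : Type*} {In : ℕ → Finset ι} {W : Type*} [TopologicalSpace W]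
  {m : (ℕ → ℝ) → C(W, ℝ)}

lemma eq_iff (hm : IsSeqMF In m) {x y : ℕ → ℝ} (hx : x ∈ XR In) (hy : y ∈ XR In) :
    m x = m y ↔ SeqApprox In x y :=
  hm.1 x hx y hy

lemma le_iff_of_mem_Xplus (hm : IsSeqMF In m) {x y : ℕ → ℝ} (hx : x ∈ Xplus In)
    (hy : y ∈ Xplus In) : (∀ w, m x w ≤ m y w) ↔ SeqLeq In x y :=
  hm.2.1 x hx y hy

lemma map_cardSeq (hm : IsSeqMF In m) : m (cardSeq In) = 1 := hm.2.2.1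

lemma map_add (hm : IsSeqMF In m) {x y : ℕ → ℝ} (hx : x ∈ XR In) (hy : y ∈ XR In) :
    m (x + y) = m x + m y :=
  hm.2.2.2.1 x hx y hy

lemma map_smul (hm : IsSeqMF In m) {x : ℕ → ℝ} (hx : x ∈ XR In) (c : ℝ) :
    m (c • x) = c • m x :=
  hm.2.2.2.2 x hx c

lemma map_sum (hmono : Monotone In) (hm : IsSeqMF In m) {α : Type*} {J : Finset α}
    {z : α → ℕ → ℝ} (hz : ∀ a ∈ J, z a ∈ XR In) : m (∑ a ∈ J, z a) = ∑ a ∈ J, m (z a) := by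
  classical
  induction J using Finset.induction_on with
  | empty => simpa using hm.map_smul (cardSeq_mem_XR hmono) 0
  | insert a J ha ih =>
    rw [Finset.forall_mem_insert] at hz
    have hJ : ∑ b ∈ J, z b ∈ XR In := by
      simp only [mem_XR_iff hmono] at hz ⊢
      exact Submodule.sum_mem _ hz.2
    rw [Finset.sum_insert ha, Finset.sum_insert ha, hm.map_add hz.1 hJ, ih hz.2]

lemma apply_add_smul_cardSeq (hmono : Monotone In) (hm : IsSeqMF In m) {x : ℕ → ℝ}
    (hx : x ∈ XR In) (c : ℝ) (w : W) : m (x + c • cardSeq In) w = m x w + c := by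
  rw [hm.map_add hx (smul_mem_XR hmono c (cardSeq_mem_XR hmono)),
    hm.map_smul (cardSeq_mem_XR hmono), hm.map_cardSeq]
  simp

lemma le_iff_seqLeq (hmono : Monotone In) (hm : IsSeqMF In m) {x y : ℕ → ℝ} (hx : x ∈ XR In)
    (hy : y ∈ XR In) : (∀ w, m x w ≤ m y w) ↔ SeqLeq In x y := by
  obtain ⟨C, hxC, hyC⟩ := ((eventually_add_smul_cardSeq_mem_Xplus hmono hx).and
    (eventually_add_smul_cardSeq_mem_Xplus hmono hy)).exists
  have h := hm.le_iff_of_mem_Xplus hxC hyC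
  simp only [apply_add_smul_cardSeq hmono hm hx, apply_add_smul_cardSeq hmono hm hy,
    add_le_add_iff_right] at h
  simpa only [SeqLeq, Pi.add_apply, add_sub_add_right_eq_sub] using h

lemma abs_apply_le_apply_abs (hmono : Monotone In) (hm : IsSeqMF In m) {z : ℕ → ℝ}
    (hz : z ∈ XR In) (w : W) : |m z w| ≤ m |z| w := by
  have hz' := (mem_XR_iff hmono).1 hz
  have habs := (mem_XR_iff hmono).2 (abs_mem_boundedIncrements hz')
  have hneg : -z ∈ XR In := (mem_XR_iff hmono).2 (neg_mem hz')
  have h₁ := (hm.le_iff_seqLeq hmono hz habs).2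
    (seqLeq_of_le (sub_mem (abs_mem_boundedIncrements hz') hz') (le_abs_self z)) w
  have h₂ := (hm.le_iff_seqLeq hmono hneg habs).2
    (seqLeq_of_le (sub_mem (abs_mem_boundedIncrements hz') (neg_mem hz')) (neg_le_abs z)) w
  rw [← neg_one_smul ℝ z, hm.map_smul hz] at h₂
  simp only [ContinuousMap.smul_apply, smul_eq_mul, neg_one_mul] at h₂
  exact abs_le'.2 ⟨h₁, h₂⟩

lemma sum_abs_sub_le_apply_deviation (hmono : Monotone In) (hm : IsSeqMF In m)
    (J : Finset (XR In)) (f : XR In → ℝ) (w : W) :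
    ∑ x ∈ J, |m x w - f x| ≤ m (deviation In J f) w := by
  have hdev (x : XR In) : x.1 - f x • cardSeq In ∈ XR In :=
    (mem_XR_iff hmono).2 (sub_smul_cardSeq_mem_boundedIncrements hmono x.2 (f x))
  rw [deviation, hm.map_sum hmono fun x _ =>
    (mem_XR_iff hmono).2 (abs_mem_boundedIncrements ((mem_XR_iff hmono).1 (hdev x))),
    ContinuousMap.sum_apply]
  refine Finset.sum_le_sum fun x _ => ?_
  have hval : m (x.1 - f x • cardSeq In) w = m x w - f x := by
    rw [sub_eq_add_neg x.1, ← neg_smul, hm.apply_add_smul_cardSeq hmono x.2, sub_eq_add_neg]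
  rw [← hval]
  exact hm.abs_apply_le_apply_abs hmono (hdev x) w

lemma limitDensities_subset_range [Nonempty ι] [CompactSpace W] (hmono : Monotone In)
    (hcover : ∀ i, ∃ n, i ∈ In n) (hm : IsSeqMF In m) :
    limitDensities In ⊆ Set.range (evalMap In m) := by
  intro f hf
  by_contra hfm
  obtain ⟨U, hU, hUf⟩ := mapClusterPt_iff_ultrafilter.1 hf
  obtain ⟨J, hJ⟩ := isCompact_univ.elim_finite_subcover (fun x : XR In => {w | m x w ≠ f x})
    (fun x => isOpen_ne_fun (m x).continuous continuous_const)
    (fun w _ => Set.mem_iUnion.2 (Function.ne_iff.1 fun h => hfm ⟨w, h⟩))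
  obtain ⟨ε, hε, hεJ⟩ : ∃ ε > 0, ∀ w, ε ≤ ∑ x ∈ J, |m x w - f x| := by
    refine exists_pos_le_of_forall_pos (continuous_finsetSum J fun x _ =>
      ((m x).continuous.sub continuous_const).abs) fun w => ?_
    obtain ⟨x, hxJ, hx⟩ := Set.mem_iUnion₂.1 (hJ (Set.mem_univ w))
    exact Finset.sum_pos' (fun _ _ => abs_nonneg _) ⟨x, hxJ, abs_pos.2 (sub_ne_zero.2 hx)⟩
  have hεXR := smul_mem_XR hmono ε (cardSeq_mem_XR hmono)
  have hZXR := deviation_mem_XR hmono J f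
  have hseq : SeqLeq In (ε • cardSeq In) (deviation In J f) := by
    refine (hm.le_iff_seqLeq hmono hεXR hZXR).1 fun w => ?_
    calc m (ε • cardSeq In) w = ε := by simp [hm.map_smul (cardSeq_mem_XR hmono), hm.map_cardSeq]
      _ ≤ ∑ x ∈ J, |m x w - f x| := hεJ w
      _ ≤ m (deviation In J f) w := hm.sum_abs_sub_le_apply_deviation hmono J f w
  have hlim : Tendsto (fun n => (deviation In J f n - (ε • cardSeq In) n) / cardSeq In n) U
      (𝓝 (-ε)) := by
    have h := (tendsto_deviation_div hmono hcover hU hUf J).sub_const ε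
    rw [zero_sub] at h
    refine h.congr' (hU ?_)
    filter_upwards [eventually_cardSeq_pos hmono hcover] with n hn
    rw [Pi.smul_apply, smul_eq_mul, sub_div, mul_div_cancel_right₀ _ hn.ne']
  obtain ⟨C, hC⟩ := exists_abs_div_cardSeq_le
    (sub_mem ((mem_XR_iff hmono).1 hZXR) ((mem_XR_iff hmono).1 hεXR))
  have hle := (mapClusterPt_iff_ultrafilter.2 ⟨U, hU, hlim⟩).liminf_le
    (isBoundedUnder_ge_of_abs_le hC)
  exact absurd (hseq.trans hle) (by linarith)

lemma seqLeq_of_le_on_limitDensities [Nonempty ι] [CompactSpace W] (hmono : Monotone In)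
    (hcover : ∀ i, ∃ n, i ∈ In n) (hm : IsSeqMF In m) {x y : ℕ → ℝ} (hx : x ∈ XR In)
    (hy : y ∈ XR In) (h : ∀ w, evalMap In m w ∈ limitDensities In → m x w ≤ m y w) :
    SeqLeq In x y := by
  set u : ℕ → ℝ := fun n => (y n - x n) / cardSeq In n
  obtain ⟨C, hC⟩ : ∃ C, ∀ n, |u n| ≤ C :=
    exists_abs_div_cardSeq_le (sub_mem ((mem_XR_iff hmono).1 hy) ((mem_XR_iff hmono).1 hx))
  obtain ⟨U, hU, hUL⟩ := mapClusterPt_iff_ultrafilter.1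
    (MapClusterPt.liminf (f := atTop) (isCoboundedUnder_ge_of_abs_le hC)
      (isBoundedUnder_ge_of_abs_le hC))
  obtain ⟨f, hf⟩ := exists_tendsto_density hmono U
  have hfΩ : f ∈ limitDensities In := mapClusterPt_iff_ultrafilter.2 ⟨U, hU, hf⟩
  obtain ⟨w, rfl⟩ := hm.limitDensities_subset_range hmono hcover hfΩ
  have hlim := (tendsto_pi_nhds.1 hf ⟨y, hy⟩).sub (tendsto_pi_nhds.1 hf ⟨x, hx⟩)
  simp only [density, ← sub_div] at hlim
  change 0 ≤ liminf u atTop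
  rw [tendsto_nhds_unique hUL hlim]
  exact sub_nonneg.2 (h w hfΩ)

lemma restrict (hm : IsSeqMF In m) {V : Set W}
    (hV : ∀ x ∈ XR In, ∀ y ∈ XR In, (∀ v ∈ V, m x v ≤ m y v) → ∀ w, m x w ≤ m y w) :
    IsSeqMF In fun x => (m x).restrict V := by
  have hle : ∀ x ∈ XR In, ∀ y ∈ XR In,
      (∀ v : V, (m x).restrict V v ≤ (m y).restrict V v) ↔ ∀ w, m x w ≤ m y w :=
    fun x hx y hy => ⟨fun h => hV x hx y hy fun v hv => h ⟨v, hv⟩, fun h v => h v⟩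
  refine ⟨fun x hx y hy => ?_, fun x hx y hy => ?_, ?_, fun x hx y hy => ?_, fun x hx c => ?_⟩
  · rw [← hm.eq_iff hx hy]
    refine ⟨fun h => ContinuousMap.ext fun w => le_antisymm ?_ ?_,
      congrArg (ContinuousMap.restrict V)⟩
    · exact (hle x hx y hy).1 (fun v => (DFunLike.congr_fun h v).le) w
    · exact (hle y hy x hx).1 (fun v => (DFunLike.congr_fun h v).ge) w
  · rw [hle x (Xplus_subset_XR hx) y (Xplus_subset_XR hy)]
    exact hm.le_iff_of_mem_Xplus hx hy
  · ext v
    exact DFunLike.congr_fun hm.map_cardSeq v.1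
  · ext v
    simp [hm.map_add hx hy]
  · ext v
    simp [hm.map_smul hx c]

lemma range_evalMap_eq [Nonempty ι] [CompactSpace W] (hmono : Monotone In)
    (hcover : ∀ i, ∃ n, i ∈ In n) (hm : IsSeqMF In m) (hirr : ¬ SMFReducible In m) :
    Set.range (evalMap In m) = limitDensities In := by
  refine Set.Subset.antisymm ?_ (hm.limitDensities_subset_range hmono hcover)
  have hV : evalMap In m ⁻¹' limitDensities In = Set.univ := by
    by_contra hne
    refine hirr ⟨_, (isClosed_limitDensities.preimage continuous_evalMap).isCompact, hne,
      hm.restrict fun x hx y hy h => ?_⟩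
    exact (hm.le_iff_seqLeq hmono hx hy).2
      (hm.seqLeq_of_le_on_limitDensities hmono hcover hx hy h)
  rintro _ ⟨w, rfl⟩
  exact Set.eq_univ_iff_forall.1 hV w

end IsSeqMF

theorem stmt14_general {ι : Type*} [Infinite ι]
    (In : ℕ → Finset ι) (hmono : Monotone In) (hcover : ∀ i : ι, ∃ n, i ∈ In n)
    {W₁ : Type*} [TopologicalSpace W₁] [CompactSpace W₁]
    {W₂ : Type*} [TopologicalSpace W₂] [CompactSpace W₂]
    (m₁ : (ℕ → ℝ) → C(W₁, ℝ)) (hm₁ : IsSeqMF In m₁) (hmin₁ : SMFMinimal In m₁)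
    (m₂ : (ℕ → ℝ) → C(W₂, ℝ)) (hm₂ : IsSeqMF In m₂) (hmin₂ : SMFMinimal In m₂) :
    ∃ φ : W₁ ≃ₜ W₂, ∀ x ∈ XR In, ∀ w : W₁, m₂ x (φ w) = m₁ x w := by
  obtain ⟨φ, hφ⟩ := exists_homeomorph_comp_eq_of_range_eq
    SeqMeasure.continuous_evalMap SeqMeasure.continuous_evalMap
    (SeqMeasure.evalMap_injective hmin₁.1) (SeqMeasure.evalMap_injective hmin₂.1)
    ((hm₁.range_evalMap_eq hmono hcover hmin₁.2).trans
      (hm₂.range_evalMap_eq hmono hcover hmin₂.2).symm)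
  exact ⟨φ, fun x hx w => congrFun (hφ w) ⟨x, hx⟩⟩

/-- any two minimal sequence measure functions are topologically
equivalent: there is a homeomorphism `φ : W₁ → W₂` with `m₂ x (φ w) = m₁ x w` for all
`x ∈ X^ℝ` and `w ∈ W₁`. -/
theorem stmt14 {ι : Type*} [Countable ι] [Infinite ι]
    (In : ℕ → Finset ι) (hmono : Monotone In) (hcover : ∀ i : ι, ∃ n, i ∈ In n)
    {W₁ : Type*} [TopologicalSpace W₁] [CompactSpace W₁] [T2Space W₁]
    {W₂ : Type*} [TopologicalSpace W₂] [CompactSpace W₂] [T2Space W₂]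
    (m₁ : (ℕ → ℝ) → C(W₁, ℝ)) (hm₁ : IsSeqMF In m₁) (hmin₁ : SMFMinimal In m₁)
    (m₂ : (ℕ → ℝ) → C(W₂, ℝ)) (hm₂ : IsSeqMF In m₂) (hmin₂ : SMFMinimal In m₂) :
    ∃ φ : W₁ ≃ₜ W₂, ∀ x ∈ XR In, ∀ w : W₁, m₂ x (φ w) = m₁ x w :=
  stmt14_general In hmono hcover m₁ hm₁ hmin₁ m₂ hm₂ hmin₂
end
end
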